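/- For all vectors u = (u₁, u₂) and v = (v₁, v₂) in ℤ², the congruence u₁·v₂ − u₂·v₁ ≡ gcd(u₁, u₂) + gcd(v₁, v₂) + gcd(u₁+v₁, u₂+v₂) (mod 2) holds. (This is the congruence, derived in the paper from Pick's formula, stating that the multiplicity of a trivalent vertex of a tropical curve — which is twice the area of the dual lattice triangle, i.e. the absolute value of the determinant of two of its edge vectors — is congruent modulo 2 to the lattice perimeter of that triangle, i.e. the sum of the gcds of the coordinates of its three edge vectors u, v and −(u+v).) -/

import Mathlib

/-! Modulo 2, `gcd(a, b)` is `1` unless `a` and `b` are both even, so it equals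
`1 - (1 - a)(1 - b) ≡ a + b + ab`. Substituting this for the three edge vectors turns the
congruence into a polynomial identity over `ZMod 2`. -/

lemma Int.natCast_gcd_zmod_two (a b : ℤ) : (Int.gcd a b : ZMod 2) = a + b + a * b := by
  have gcd_eq_zero_iff :
      (Int.gcd a b : ZMod 2) = 0 ↔ (a : ZMod 2) = 0 ∧ (b : ZMod 2) = 0 := by
    rw [← Int.cast_natCast]
    simpa only [ZMod.intCast_zmod_eq_zero_iff_dvd] using Int.dvd_coe_gcd_iff
  revert gcd_eq_zero_iff
  generalize (Int.gcd a b : ZMod 2) = g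
  generalize (a : ZMod 2) = x
  generalize (b : ZMod 2) = y
  decide +revert

/-- For all `u = (u₁,u₂)` and `v = (v₁,v₂)` in `ℤ²`, the determinant `u₁v₂ − u₂v₁` is
congruent modulo 2 to `gcd(u₁,u₂) + gcd(v₁,v₂) + gcd(u₁+v₁,u₂+v₂)`: the multiplicity
of a trivalent vertex of a tropical curve is congruent mod 2 to the lattice perimeter
of the dual triangle. -/
theorem det_modEq_lattice_perimeter (u₁ u₂ v₁ v₂ : ℤ) :
    u₁ * v₂ - u₂ * v₁ ≡
      (Int.gcd u₁ u₂ : ℤ) + (Int.gcd v₁ v₂ : ℤ) + (Int.gcd (u₁ + v₁) (u₂ + v₂) : ℤ)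
      [ZMOD 2] := by
  refine (ZMod.intCast_eq_intCast_iff _ _ 2).mp ?_
  push_cast
  rw [Int.natCast_gcd_zmod_two, Int.natCast_gcd_zmod_two, Int.natCast_gcd_zmod_two]
  push_cast
  have two_eq_zero : (2 : ZMod 2) = 0 := rfl
  linear_combination (-(u₁ + u₂ + v₁ + v₂ + u₁ * u₂ + v₁ * v₂ + u₂ * v₁ : ZMod 2)) * two_eq_zero
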